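/- arXiv:1404.6570 — 2 statements merged into one kernel-verified Lean document; each statement's English description precedes it below -/
import Mathlib

section
/- Let (X,Y) be a partition of the vertex set of a DAG H with no edges from Y to X, let B = {v : w(v) < 0}, A = {v : w(v) > 0}, and C = {(s,v) : v ∈ B ∩ X} ∪ {(v,t) : v ∈ A ∩ Y} in the augmented graph H'. Then Σ_{v∈X} w(v) − Σ_{v∈Y} w(v) = Σ_{v∈A} w(v) − Σ_{v∈B} w(v) − 2·Σ_{e∈C} w'(e), where w'(s,v) = −w(v) and w'(v,t) = w(v). -/
open Classical in
/-- For a valid partition (X,Y) of a vertex-weighted DAG (no edge from Y to X),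
with A = {v : w v > 0}, B = {v : w v < 0} and the augmented-graph cut
C = {(s,v) : v ∈ B ∩ X} ∪ {(v,t) : v ∈ A ∩ Y} (with weights w'(s,v) = −w(v),
w'(v,t) = w(v)), we have
Σ_{v∈X} w v − Σ_{v∈Y} w v = Σ_{v∈A} w v − Σ_{v∈B} w v − 2·Σ_{e∈C} w'(e). -/
theorem augmented_cut_identity {V : Type*} [Fintype V] [DecidableEq V]
    (E : V → V → Prop) (hacyc : ∀ v, ¬ Relation.TransGen E v v)
    (w : V → ℝ) (hw : ∀ v, w v ≠ 0)
    (X Y : Finset V) (hunion : X ∪ Y = Finset.univ) (hdisj : Disjoint X Y)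
    (hnoYX : ∀ u v, E u v → u ∈ Y → v ∉ X) :
    (∑ v ∈ X, w v) - (∑ v ∈ Y, w v) =
      (∑ v ∈ Finset.univ.filter (fun v => 0 < w v), w v) -
      (∑ v ∈ Finset.univ.filter (fun v => w v < 0), w v) -
      2 * ((∑ v ∈ (Finset.univ.filter (fun v => w v < 0)) ∩ X, (-(w v))) +
           (∑ v ∈ (Finset.univ.filter (fun v => 0 < w v)) ∩ Y, w v)) := by
  classical
  set A := Finset.univ.filter (fun v => 0 < w v) with hA
  set B := Finset.univ.filter (fun v => w v < 0) with hB
  have hABdisj : Disjoint A B := by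
    rw [Finset.disjoint_left]
    intro v hvA hvB
    simp only [hA, hB, Finset.mem_filter] at hvA hvB
    linarith [hvA.2, hvB.2]
  have hABunion : A ∪ B = Finset.univ := by
    ext v
    simp only [hA, hB, Finset.mem_union, Finset.mem_filter, Finset.mem_univ, true_and,
      iff_true]
    rcases lt_trichotomy (w v) 0 with h | h | h
    · exact Or.inr h
    · exact absurd h (hw v)
    · exact Or.inl h
  have keyXY : ∀ S : Finset V, ∑ v ∈ S, w v = ∑ v ∈ S ∩ X, w v + ∑ v ∈ S ∩ Y, w v := by
    intro S
    rw [← Finset.sum_union (hdisj.mono Finset.inter_subset_right Finset.inter_subset_right),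
      ← Finset.inter_union_distrib_left, hunion, Finset.inter_univ]
  have keyAB : ∀ S : Finset V, ∑ v ∈ S, w v = ∑ v ∈ A ∩ S, w v + ∑ v ∈ B ∩ S, w v := by
    intro S
    rw [← Finset.sum_union (hABdisj.mono Finset.inter_subset_left Finset.inter_subset_left),
      ← Finset.union_inter_distrib_right, hABunion, Finset.univ_inter]
  rw [keyAB X, keyAB Y, keyXY A, keyXY B, Finset.sum_neg_distrib]
  ring
end

section
/- Pruning rule P1 preserves optimality: if v is a vertex of the overlay DAG H with w(v) > 0 such that every vertex in UPSTREAM(v) (v and all vertices with a directed path to v) also has positive weight and has already been removable by P1, then in the augmented graph H' no vertex of UPSTREAM(v) is reachable from the source s, and hence in any min-cut-induced optimal partition all vertices of UPSTREAM(v) are assigned to X (push). -/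
/-- Edge relation of the augmented graph H' (source `Sum.inr false`, sink
`Sum.inr true`) after removing the source-edges into `SB` and the sink-edges
out of `SA`. -/
def augRel {V : Type*} (E : V → V → Prop) (w : V → ℝ) (SB SA : Set V) :
    (V ⊕ Bool) → (V ⊕ Bool) → Prop := fun a b =>
  match a, b with
  | Sum.inl u, Sum.inl v => E u v
  | Sum.inr false, Sum.inl v => w v < 0 ∧ v ∉ SB
  | Sum.inl v, Sum.inr true => 0 < w v ∧ v ∉ SA
  | _, _ => False

/-- A path in the augmented graph between two original vertices projects to a
path in `E`. -/
lemma aug_path_to_E {V : Type*} (E : V → V → Prop) (w : V → ℝ) (SB SA : Set V)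
    {a c : V ⊕ Bool} (h : Relation.ReflTransGen (augRel E w SB SA) a c) :
    ∀ x u : V, a = Sum.inl x → c = Sum.inl u → Relation.ReflTransGen E x u := by
  induction h using Relation.ReflTransGen.head_induction_on with
  | refl => rintro x u rfl h; cases h; exact Relation.ReflTransGen.refl
  | @head a b hab htail ih =>
    rintro x u rfl rfl
    match b, hab, htail, ih with
    | Sum.inl y, hab, _, ih =>
        exact Relation.ReflTransGen.head hab (ih y u rfl rfl)
    | Sum.inr true, hab, htail, _ =>
        exfalso
        cases htail.cases_head with
        | inl h => cases h
        | inr h =>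
          obtain ⟨c, hc, -⟩ := h
          cases c with
          | inl z => exact hc
          | inr bb => cases bb <;> exact hc

/-- Pruning rule P1 preserves optimality: if v has positive weight and every
vertex upstream of v (every u with a directed path u ⇝ v, including v itself)
also has positive weight, then no upstream vertex of v is reachable from the
source s in the augmented graph — even after removing any set of source/sink
edges (in particular, the edges of any cut).  Hence in any min-cut-induced
partition every upstream vertex of v lies outside Y, i.e. is assigned push. -/
theorem pruning_P1_preserves_optimality {V : Type*} [Fintype V]
    (E : V → V → Prop) (hacyc : ∀ x, ¬ Relation.TransGen E x x)
    (w : V → ℝ) (hw : ∀ x, w x ≠ 0)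
    (v : V) (hv : 0 < w v)
    (hup : ∀ u, Relation.ReflTransGen E u v → 0 < w u) :
    ∀ u, Relation.ReflTransGen E u v →
      ∀ SB SA : Set V,
        ¬ Relation.ReflTransGen (augRel E w SB SA) (Sum.inr false) (Sum.inl u) := by
  intro u huv SB SA hpath
  cases hpath.cases_head with
  | inl h => cases h
  | inr h =>
    obtain ⟨b, hb, htail⟩ := h
    match b, hb with
    | Sum.inl x, hb =>
        have hx : Relation.ReflTransGen E x u :=
          aug_path_to_E E w SB SA htail x u rfl rfl
        have := hup x (hx.trans huv)
        linarith [hb.1]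
end
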